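/- arXiv:1911.10061 — 2 statements merged into one kernel-verified Lean document; each statement's English description precedes it below -/
import Mathlib

section
/- Let d ≥ 3 and k ≥ 1 be integers, let E be a real inner product space of dimension d + k equipped with its Lebesgue (Haar) measure, let F ⊆ E be a d-dimensional subspace and P the orthogonal projection of E onto F. Let c, ν, A > 0 and let V : F → ℝ be measurable with |V(q)| ≤ c|q|^{−2−ν} for all q ∈ F with |q| ≥ A, and such that q ↦ (1+|q|)V(q)·𝟙_{{|q| < A}}(q) belongs to L²(F). Let φ : E → ℝ be measurable such that for every 0 ≤ α < (d+k−2)/2 the function x ↦ (1+|Px|)^{−1}(1+|x|)^α φ(x) belongs to L²(E). Then for every γ with 0 < γ < min{d/2 − 1, ν}, the function x ↦ (1+|x|)^γ V(Px) φ(x) belongs to L¹(E). -/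
/-!
Split `(1+|x|)^γ V(Px) φ(x)` as `G · H` with `H = (1+|Px|)⁻¹(1+|x|)^α φ ∈ L²` for `α`
just below `(d+k-2)/2` and `G = (1+|x|)^(γ-α) (1+|Px|) V(Px)`, so that Cauchy–Schwarz reduces
the claim to `G ∈ L²`. Writing `x = q + y` with `q ∈ F`, `y ∈ Fᗮ`, and `s = 2(α-γ)`, the bound
`(1+|x|)^(-s) ≤ (1+|q|)^(-(s-t)) (1+|y|)^(-t)` separates the variables; for `t > k` the
`y`-integral converges, and the remaining integral of `(1+|q|)^(-(s-t)) ((1+|q|) V(q))²` over `F`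
is finite near the origin by the local `L²` hypothesis and at infinity by the decay of `V`,
since `γ < min (d/2 - 1) ν` leaves room to choose `α, t` with `d < 2 + 2ν + (s-t)`.
-/

open MeasureTheory Measure Module

theorem Submodule.integrable_of_integrable_comp_add {E G : Type*} [NormedAddCommGroup E]
    [NormedSpace ℝ E] [FiniteDimensional ℝ E] [MeasurableSpace E] [BorelSpace E]
    [NormedAddCommGroup G] {K L : Submodule ℝ E} (hKL : IsCompl K L)
    [MeasurableSpace K] [BorelSpace K] [MeasurableSpace L] [BorelSpace L]
    (μ : Measure E) [μ.IsAddHaarMeasure] (μK : Measure K) [μK.IsAddHaarMeasure]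
    (μL : Measure L) [μL.IsAddHaarMeasure] {f : E → G}
    (hf : Integrable (fun p : K × L => f (p.1 + p.2)) (μK.prod μL)) : Integrable f μ := by
  set e := (K.prodEquivOfIsCompl L hKL).toContinuousLinearEquiv
  have := e.isAddHaarMeasure_map (μK.prod μL)
  rw [isAddLeftInvariant_eq_smul μ ((μK.prod μL).map e)]
  exact ((integrable_map_equiv e.toHomeomorph.toMeasurableEquiv f).mpr hf).smul_measure
    ENNReal.coe_ne_top

theorem one_add_rpow_neg_le_mul {a b x s t : ℝ} (ha : 0 ≤ a) (hax : a ≤ x) (hb : 0 ≤ b)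
    (hbx : b ≤ x) (ht : 0 ≤ t) (hts : t ≤ s) :
    (1 + x) ^ (-s) ≤ (1 + a) ^ (-(s - t)) * (1 + b) ^ (-t) := by
  calc (1 + x) ^ (-s) = (1 + x) ^ (-(s - t)) * (1 + x) ^ (-t) := by
        rw [← Real.rpow_add (by linarith)]; ring_nf
    _ ≤ (1 + a) ^ (-(s - t)) * (1 + b) ^ (-t) := by
        have hpos : ∀ u : ℝ, 0 ≤ u → 0 < 1 + u := fun u hu => by linarith
        exact mul_le_mul
          (Real.rpow_le_rpow_of_nonpos (hpos a ha) (by linarith) (by linarith))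
          (Real.rpow_le_rpow_of_nonpos (hpos b hb) (by linarith) (by linarith))
          (Real.rpow_nonneg (by linarith) _) (Real.rpow_nonneg (hpos a ha).le _)

theorem rpow_neg_le_mul_one_add_rpow_neg {A x σ : ℝ} (hA : 0 < A) (hAx : A ≤ x)
    (hσ : 0 ≤ σ) :
    x ^ (-σ) ≤ ((1 + A) / A) ^ σ * (1 + x) ^ (-σ) := by
  have hx : 0 < x := hA.trans_le hAx
  have hratio : (1 + x) / x ≤ (1 + A) / A := by
    rw [div_le_div_iff₀ hx hA]; nlinarith
  calc x ^ (-σ) = ((1 + x) / x) ^ σ * (1 + x) ^ (-σ) := by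
        rw [Real.div_rpow (by linarith) hx.le, Real.rpow_neg hx.le, Real.rpow_neg (by linarith)]
        field_simp
    _ ≤ ((1 + A) / A) ^ σ * (1 + x) ^ (-σ) := by
        gcongr

theorem one_add_rpow_neg_mul_sq_le_of_abs_le {A c σ r x v : ℝ} (hA : 0 < A) (hAx : A ≤ x)
    (hσ : 0 ≤ σ) (hv : |v| ≤ c * x ^ (-σ)) :
    (1 + x) ^ (-r) * ((1 + x) * v) ^ 2 ≤
      (c * ((1 + A) / A) ^ σ) ^ 2 * (1 + x) ^ (-(2 * σ - 2 + r)) := by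
  have hx : 0 < x := hA.trans_le hAx
  have hX : 0 < 1 + x := by linarith
  have hc : 0 ≤ c := nonneg_of_mul_nonneg_left ((abs_nonneg v).trans hv) (by positivity)
  have hv' : |v| ≤ c * ((1 + A) / A) ^ σ * (1 + x) ^ (-σ) := by
    rw [mul_assoc]
    exact hv.trans (mul_le_mul_of_nonneg_left (rpow_neg_le_mul_one_add_rpow_neg hA hAx hσ) hc)
  have hexp : (1 + x) ^ (-r) * (1 + x) ^ 2 * ((1 + x) ^ (-σ)) ^ 2 =
      (1 + x) ^ (-(2 * σ - 2 + r)) := by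
    rw [← Real.rpow_mul_natCast hX.le, ← Real.rpow_natCast, ← Real.rpow_add hX,
      ← Real.rpow_add hX]
    ring_nf
  calc (1 + x) ^ (-r) * ((1 + x) * v) ^ 2 = (1 + x) ^ (-r) * (1 + x) ^ 2 * |v| ^ 2 := by
        rw [sq_abs]; ring
    _ ≤ (1 + x) ^ (-r) * (1 + x) ^ 2 * (c * ((1 + A) / A) ^ σ * (1 + x) ^ (-σ)) ^ 2 := by
        gcongr
    _ = (c * ((1 + A) / A) ^ σ) ^ 2 * (1 + x) ^ (-(2 * σ - 2 + r)) := by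
        rw [← hexp]; ring

theorem integrable_one_add_norm_rpow_neg_mul_sq {F : Type*} [NormedAddCommGroup F]
    [NormedSpace ℝ F] [FiniteDimensional ℝ F] [MeasurableSpace F] [BorelSpace F]
    {μ : Measure F} [μ.IsAddHaarMeasure] {c σ A r : ℝ} (hA : 0 < A) {V : F → ℝ}
    (hV : Measurable V) (hVdecay : ∀ q : F, A ≤ ‖q‖ → |V q| ≤ c * ‖q‖ ^ (-σ))
    (hVloc : MemLp ({q : F | ‖q‖ < A}.indicator fun q => (1 + ‖q‖) * V q) 2 μ)
    (hσ : 0 ≤ σ) (hr : 0 ≤ r) (hdim : finrank ℝ F < 2 * σ - 2 + r) :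
    Integrable (fun q => (1 + ‖q‖) ^ (-r) * ((1 + ‖q‖) * V q) ^ 2) μ := by
  have hnear := (memLp_two_iff_integrable_sq hVloc.1).mp hVloc
  have hfar := (integrable_one_add_norm (μ := μ) hdim).const_mul ((c * ((1 + A) / A) ^ σ) ^ 2)
  refine (hnear.add hfar).mono' (by fun_prop) (.of_forall fun q => ?_)
  rw [Real.norm_of_nonneg (by positivity), Pi.add_apply]
  by_cases hq : ‖q‖ < A
  · rw [Set.indicator_of_mem (by exact hq)]
    have hweight : (1 + ‖q‖) ^ (-r) ≤ 1 :=
      Real.rpow_le_one_of_one_le_of_nonpos (by linarith [norm_nonneg q]) (by linarith)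
    have hle := mul_le_of_le_one_left (sq_nonneg ((1 + ‖q‖) * V q)) hweight
    have hfar_nonneg : 0 ≤ (c * ((1 + A) / A) ^ σ) ^ 2 * (1 + ‖q‖) ^ (-(2 * σ - 2 + r)) := by positivity
    linarith
  · rw [Set.indicator_of_notMem (by exact hq), zero_pow two_ne_zero, zero_add]
    exact one_add_rpow_neg_mul_sq_le_of_abs_le hA (not_lt.mp hq) hσ (hVdecay q (not_lt.mp hq))

theorem norm_le_norm_add_of_inner_eq_zero {E : Type*} [NormedAddCommGroup E]
    [InnerProductSpace ℝ E] {x y : E} (h : inner ℝ x y = 0) : ‖x‖ ≤ ‖x + y‖ := by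
  have hpyth := norm_add_sq_eq_norm_sq_add_norm_sq_real h
  exact (mul_self_le_mul_self_iff (norm_nonneg _) (norm_nonneg _)).mpr
    (by nlinarith [mul_self_nonneg ‖y‖])

theorem memLp_two_one_add_norm_rpow_neg_mul_comp_orthogonalProjection {E : Type*}
    [NormedAddCommGroup E] [InnerProductSpace ℝ E] [FiniteDimensional ℝ E] [MeasurableSpace E]
    [BorelSpace E] (μ : Measure E) [μ.IsAddHaarMeasure] (F : Submodule ℝ E)
    [MeasurableSpace F] [BorelSpace F] (μF : Measure F) [μF.IsAddHaarMeasure] {g : F → ℝ}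
    (hg : Measurable g) {σ t : ℝ} (ht : finrank ℝ Fᗮ < t) (htσ : t ≤ 2 * σ)
    (hgw : Integrable (fun q => (1 + ‖q‖) ^ (-(2 * σ - t)) * g q ^ 2) μF) :
    MemLp (fun x => (1 + ‖x‖) ^ (-σ) * g (F.orthogonalProjectionOnto x)) 2 μ := by
  let : MeasurableSpace Fᗮ := borel Fᗮ
  have : BorelSpace Fᗮ := ⟨rfl⟩
  have hG : Measurable fun x => (1 + ‖x‖) ^ (-σ) * g (F.orthogonalProjectionOnto x) := by
    fun_prop
  rw [memLp_two_iff_integrable_sq hG.aestronglyMeasurable]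
  refine Submodule.integrable_of_integrable_comp_add F.isCompl_orthogonal μ μF addHaar ?_
  have hK : Integrable (fun y : Fᗮ => (1 + ‖y‖) ^ (-t)) addHaar := integrable_one_add_norm ht
  refine (hgw.mul_prod hK).mono' ((hG.pow_const 2).comp (by fun_prop)).aestronglyMeasurable
    (.of_forall fun ⟨q, y⟩ => ?_)
  have hP : F.orthogonalProjectionOnto ((q : E) + y) = q := by
    rw [map_add, Submodule.orthogonalProjectionOnto_mem_subspace_eq_self,
      Submodule.orthogonalProjectionOnto_apply_of_mem_orthogonal y.2, add_zero]
  have horth : inner ℝ (q : E) (y : E) = 0 := Submodule.inner_right_of_mem_orthogonal q.2 y.2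
  have hq := norm_le_norm_add_of_inner_eq_zero horth
  have hy := add_comm (y : E) q ▸ norm_le_norm_add_of_inner_eq_zero (inner_eq_zero_symm.mp horth)
  have hweight := one_add_rpow_neg_le_mul (norm_nonneg q) hq (norm_nonneg y) hy
    (((finrank ℝ Fᗮ).cast_nonneg).trans ht.le) htσ
  rw [Real.norm_of_nonneg (sq_nonneg _), hP, mul_pow,
    ← Real.rpow_mul_natCast (by positivity), neg_mul, Nat.cast_ofNat, mul_comm σ]
  calc (1 + ‖(q : E) + y‖) ^ (-(2 * σ)) * g q ^ 2
      ≤ (1 + ‖q‖) ^ (-(2 * σ - t)) * (1 + ‖y‖) ^ (-t) * g q ^ 2 := by gcongr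
    _ = (1 + ‖q‖) ^ (-(2 * σ - t)) * g q ^ 2 * (1 + ‖y‖) ^ (-t) := by ring

theorem exists_weight_exponents {d k γ ν : ℝ} (hk : 0 ≤ k) (hγ : 0 < γ)
    (hγd : γ < d / 2 - 1) (hγν : γ < ν) :
    ∃ α t : ℝ, 0 ≤ α ∧ α < (d + k - 2) / 2 ∧ k < t ∧ t ≤ 2 * (α - γ) ∧
      d < 2 * (2 + ν) - 2 + (2 * (α - γ) - t) := by
  obtain ⟨η, hη, hηm⟩ :=
    exists_between (lt_min (sub_pos.2 hγν) (by linarith : 0 < d / 2 - 1 - γ))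
  obtain ⟨hην, hηd⟩ := lt_min_iff.mp hηm
  exact ⟨(d + k - 2 - η) / 2, k + η, by linarith, by linarith, by linarith, by linarith,
    by linarith⟩

theorem weighted_L1_pair_potential_general
    {E : Type*} [NormedAddCommGroup E] [InnerProductSpace ℝ E]
    [FiniteDimensional ℝ E] [MeasurableSpace E] [BorelSpace E]
    (d k : ℕ) (hdim : Module.finrank ℝ E = d + k)
    (F : Submodule ℝ E) (hF : Module.finrank ℝ F = d)
    [MeasurableSpace F] [BorelSpace F]
    (μ : Measure E) [μ.IsAddHaarMeasure]
    (μF : Measure F) [μF.IsAddHaarMeasure]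
    (c ν A : ℝ) (hA : 0 < A)
    (V : F → ℝ) (hVmeas : Measurable V)
    (hVdecay : ∀ q : F, A ≤ ‖q‖ → |V q| ≤ c * ‖q‖ ^ (-(2 + ν)))
    (hVloc : MemLp ({q : F | ‖q‖ < A}.indicator fun q => (1 + ‖q‖) * V q) 2 μF)
    (φ : E → ℝ)
    (hφ : ∀ α : ℝ, 0 ≤ α → α < ((d : ℝ) + (k : ℝ) - 2) / 2 →
      MemLp (fun x : E =>
          (1 + ‖(F.orthogonalProjectionOnto x : E)‖)⁻¹ * (1 + ‖x‖) ^ α * φ x) 2 μ) :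
    ∀ γ : ℝ, 0 < γ → γ < min ((d : ℝ) / 2 - 1) ν →
      Integrable (fun x : E =>
        (1 + ‖x‖) ^ γ * V (F.orthogonalProjectionOnto x) * φ x) μ := by
  intro γ hγ hγm
  obtain ⟨hγd, hγν⟩ := lt_min_iff.mp hγm
  obtain ⟨α, t, hα, hαd, hkt, htα, hdt⟩ :=
    exists_weight_exponents (Nat.cast_nonneg k) hγ hγd hγν
  have hFperp : finrank ℝ Fᗮ = k := by
    have := F.finrank_add_finrank_orthogonal
    omega
  have hw := integrable_one_add_norm_rpow_neg_mul_sq (μ := μF) hA hVmeas hVdecay hVloc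
    (by linarith) (by linarith) (hF ▸ hdt)
  have hG := memLp_two_one_add_norm_rpow_neg_mul_comp_orthogonalProjection μ F μF
    (g := fun q => (1 + ‖q‖) * V q) (by fun_prop) (hFperp ▸ hkt) htα hw
  refine (hG.integrable_mul (hφ α hα hαd)).congr (.of_forall fun x => ?_)
  have hPx : (1 + ‖(F.orthogonalProjectionOnto x : E)‖) ≠ 0 := by positivity
  have hx : (1 + ‖x‖) ^ (-(α - γ)) * (1 + ‖x‖) ^ α = (1 + ‖x‖) ^ γ := by
    rw [← Real.rpow_add (by positivity)]; ring_nf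
  simp only [Pi.mul_apply, Submodule.norm_coe] at hPx ⊢
  field_simp
  rw [← hx]; ring

/-- Proposition 1 of the paper, abstract form: `E` a real inner
product space of dimension `d + k` (`d ≥ 3`, `k ≥ 1`) with Haar measure `μ`, `F ⊆ E`
a `d`-dimensional subspace with orthogonal projection `P` and Haar measure `μF`;
`V : F → ℝ` measurable with `|V(q)| ≤ c|q|^{-2-ν}` for `|q| ≥ A` and
`(1+|q|)V(q)𝟙_{|q|<A} ∈ L²(F)`; `φ : E → ℝ` measurable with
`(1+|Px|)⁻¹(1+|x|)^α φ ∈ L²(E)` for all `0 ≤ α < (d+k-2)/2`.  Then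
`(1+|x|)^γ V(Px) φ(x) ∈ L¹(E)` for every `0 < γ < min{d/2 - 1, ν}`. -/
theorem weighted_L1_pair_potential
    {E : Type*} [NormedAddCommGroup E] [InnerProductSpace ℝ E]
    [FiniteDimensional ℝ E] [MeasurableSpace E] [BorelSpace E]
    (d k : ℕ) (hd : 3 ≤ d) (hk : 1 ≤ k) (hdim : Module.finrank ℝ E = d + k)
    (F : Submodule ℝ E) (hF : Module.finrank ℝ F = d)
    [MeasurableSpace F] [BorelSpace F]
    (μ : Measure E) [μ.IsAddHaarMeasure]
    (μF : Measure F) [μF.IsAddHaarMeasure]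
    (c ν A : ℝ) (hc : 0 < c) (hν : 0 < ν) (hA : 0 < A)
    (V : F → ℝ) (hVmeas : Measurable V)
    (hVdecay : ∀ q : F, A ≤ ‖q‖ → |V q| ≤ c * ‖q‖ ^ (-(2 + ν)))
    (hVloc : MemLp ({q : F | ‖q‖ < A}.indicator fun q => (1 + ‖q‖) * V q) 2 μF)
    (φ : E → ℝ) (hφmeas : Measurable φ)
    (hφ : ∀ α : ℝ, 0 ≤ α → α < ((d : ℝ) + (k : ℝ) - 2) / 2 →
      MemLp (fun x : E =>
          (1 + ‖(F.orthogonalProjectionOnto x : E)‖)⁻¹ * (1 + ‖x‖) ^ α * φ x) 2 μ) :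
    ∀ γ : ℝ, 0 < γ → γ < min ((d : ℝ) / 2 - 1) ν →
      Integrable (fun x : E =>
        (1 + ‖x‖) ^ γ * V (F.orthogonalProjectionOnto x) * φ x) μ :=
  weighted_L1_pair_potential_general d k hdim F hF μ μF c ν A hA V hVmeas hVdecay hVloc φ hφ
end

section
/- Let n ≥ 3 and β = n − 2, let 0 < η < 1, and let F ∈ L¹(ℝⁿ). For x ∈ ℝⁿ let Ω₂(x) = {y : |x−y| > 1 and |y| ≤ |x|^η}. Then there exists R ≥ 1 such that the function h(x) = (∫_{Ω₂(x)} |x−y|^{−β} F(y) dy − |x|^{−β} ∫_{Ω₂(x)} F(y) dy) · 𝟙_{{|x| ≥ R}}(x) belongs to L^p(ℝⁿ) for every p > n/(n − 1 − η). -/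
/-!
For `‖x‖ ≥ R = 2 ^ (1 - η)⁻¹` every `y ∈ Ω₂(x)` satisfies `‖y‖ ≤ ‖x‖ ^ η ≤ ‖x‖ / 2`, hence
`‖x - y‖ ≥ ‖x‖ / 2`, and the mean value theorem for `t ↦ t ^ (-β)` on `[‖x‖ / 2, ∞)` gives
`|‖x - y‖ ^ (-β) - ‖x‖ ^ (-β)| ≤ β 2 ^ (β + 1) ‖x‖ ^ (-β - 1) ‖y‖ ≤ β 2 ^ (β + 1) ‖x‖ ^ (-κ)`
with `κ = β + 1 - η = n - 1 - η`. Integrating against `|F|` bounds the difference by a multiple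
of `‖F‖₁ (1 + ‖x‖) ^ (-κ)`, which lies in `Lᵖ(ℝⁿ)` as soon as `κ p > n`.
-/

open MeasureTheory Set

theorem Real.abs_rpow_neg_sub_rpow_neg_le {β c a b : ℝ} (hβ : 0 ≤ β) (hc : 0 < c)
    (ha : c ≤ a) (hb : c ≤ b) :
    |a ^ (-β) - b ^ (-β)| ≤ β * c ^ (-β - 1) * |a - b| := by
  have hderiv : ∀ t ∈ Ici c, HasDerivWithinAt (fun t : ℝ => t ^ (-β))
      (-β * t ^ (-β - 1)) (Ici c) t := fun t ht =>
    (hasDerivAt_rpow_const (Or.inl (hc.trans_le ht).ne')).hasDerivWithinAt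
  have hbound : ∀ t ∈ Ici c, ‖-β * t ^ (-β - 1)‖ ≤ β * c ^ (-β - 1) := by
    intro t ht
    rw [norm_mul, norm_neg, norm_of_nonneg hβ,
      norm_of_nonneg (rpow_nonneg (hc.trans_le ht).le _)]
    exact mul_le_mul_of_nonneg_left (rpow_le_rpow_of_nonpos hc ht (by linarith)) hβ
  simpa [Real.norm_eq_abs] using
    (convex_Ici c).norm_image_sub_le_of_norm_hasDerivWithin_le hderiv hbound hb ha

theorem Real.rpow_le_half_self {η t : ℝ} (hη : η < 1) (ht : 2 ^ (1 - η)⁻¹ ≤ t) :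
    t ^ η ≤ t / 2 := by
  have ht0 : 0 < t := (Real.rpow_pos_of_pos two_pos _).trans_le ht
  have h2 : 2 ≤ t ^ (1 - η) := by
    calc (2 : ℝ) = (2 ^ (1 - η)⁻¹) ^ (1 - η) := by
          rw [← Real.rpow_mul zero_le_two, inv_mul_cancel₀ (by linarith), Real.rpow_one]
      _ ≤ t ^ (1 - η) := by gcongr
  have hsplit : t ^ η * t ^ (1 - η) = t := by
    rw [← Real.rpow_add ht0, add_sub_cancel, Real.rpow_one]
  nlinarith [Real.rpow_nonneg ht0.le η]

theorem Real.rpow_neg_le_two_rpow_mul_one_add_rpow_neg {t κ : ℝ} (ht : 1 ≤ t) (hκ : 0 ≤ κ) :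
    t ^ (-κ) ≤ 2 ^ κ * (1 + t) ^ (-κ) := by
  have ht0 : 0 < t := zero_lt_one.trans_le ht
  calc t ^ (-κ) = t⁻¹ ^ κ := by rw [Real.rpow_neg ht0.le, Real.inv_rpow ht0.le]
    _ ≤ (2 / (1 + t)) ^ κ := by
        gcongr
        rw [le_div_iff₀ (by linarith), inv_mul_eq_div, div_le_iff₀ ht0]
        linarith
    _ = 2 ^ κ * (1 + t) ^ (-κ) := by
        rw [Real.div_rpow zero_le_two (by linarith), Real.rpow_neg (by linarith), div_eq_mul_inv]

theorem abs_norm_sub_rpow_neg_sub_norm_rpow_neg_le {E : Type*} [SeminormedAddCommGroup E]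
    {β : ℝ} (hβ : 0 ≤ β) {x y : E} (hx : 0 < ‖x‖) (hy : ‖y‖ ≤ ‖x‖ / 2) :
    |‖x - y‖ ^ (-β) - ‖x‖ ^ (-β)| ≤ β * 2 ^ (β + 1) * ‖x‖ ^ (-β - 1) * ‖y‖ := by
  have hxy : ‖x‖ / 2 ≤ ‖x - y‖ := by linarith [norm_sub_norm_le x y]
  have hdiff : |‖x - y‖ - ‖x‖| ≤ ‖y‖ := by
    simpa using abs_norm_sub_norm_le (x - y) x
  have hhalf : (‖x‖ / 2) ^ (-β - 1) = 2 ^ (β + 1) * ‖x‖ ^ (-β - 1) := by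
    rw [Real.div_rpow hx.le zero_le_two, show -β - 1 = -(β + 1) by ring,
      Real.rpow_neg zero_le_two, div_inv_eq_mul, mul_comm]
  calc |‖x - y‖ ^ (-β) - ‖x‖ ^ (-β)|
      ≤ β * (‖x‖ / 2) ^ (-β - 1) * |‖x - y‖ - ‖x‖| :=
        Real.abs_rpow_neg_sub_rpow_neg_le hβ (half_pos hx) hxy (by linarith)
    _ ≤ β * (‖x‖ / 2) ^ (-β - 1) * ‖y‖ := by gcongr
    _ = β * 2 ^ (β + 1) * ‖x‖ ^ (-β - 1) * ‖y‖ := by rw [hhalf]; ring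

theorem norm_setIntegral_mul_sub_const_mul_le {α : Type*} [MeasurableSpace α]
    {μ : Measure α} {k F : α → ℝ} {s : Set α} {c D : ℝ} (hs : MeasurableSet s)
    (hk : AEStronglyMeasurable k (μ.restrict s)) (hF : Integrable F μ)
    (hkc : ∀ y ∈ s, |k y - c| ≤ D) :
    ‖(∫ y in s, k y * F y ∂μ) - c * ∫ y in s, F y ∂μ‖ ≤ D * ∫ y in s, ‖F y‖ ∂μ := by
  have hFs : IntegrableOn F s μ := hF.integrableOn
  have hkF : IntegrableOn (fun y => k y * F y) s μ := by
    refine hFs.bdd_mul hk (c := |c| + D) (ae_restrict_of_forall_mem hs fun y hy => ?_)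
    rw [Real.norm_eq_abs]
    linarith [hkc y hy, abs_sub_abs_le_abs_sub (k y) c]
  calc ‖(∫ y in s, k y * F y ∂μ) - c * ∫ y in s, F y ∂μ‖
      = ‖∫ y in s, (k y - c) * F y ∂μ‖ := by
        rw [← integral_const_mul, ← integral_sub hkF (hFs.const_mul c)]
        simp only [sub_mul]
    _ ≤ ∫ y in s, D * ‖F y‖ ∂μ :=
        norm_integral_le_of_norm_le (hFs.norm.const_mul D)
          (ae_restrict_of_forall_mem hs fun y hy => by
            rw [norm_mul, Real.norm_eq_abs (k y - c)]
            exact mul_le_mul_of_nonneg_right (hkc y hy) (norm_nonneg _))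
    _ = D * ∫ y in s, ‖F y‖ ∂μ := integral_const_mul D _

theorem norm_setIntegral_rpow_neg_norm_sub_mul_sub_le {E : Type*} [NormedAddCommGroup E]
    [MeasurableSpace E] [OpensMeasurableSpace E] {μ : Measure E} {F : E → ℝ}
    (hF : Integrable F μ) {β ρ : ℝ} (hβ : 0 ≤ β) {x : E} (hx : 0 < ‖x‖) (hρ0 : 0 ≤ ρ)
    (hρ : ρ ≤ ‖x‖ / 2)
    {s : Set E} (hs : MeasurableSet s) (hsρ : ∀ y ∈ s, ‖y‖ ≤ ρ) :
    ‖(∫ y in s, ‖x - y‖ ^ (-β) * F y ∂μ) - ‖x‖ ^ (-β) * ∫ y in s, F y ∂μ‖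
      ≤ β * 2 ^ (β + 1) * ‖x‖ ^ (-β - 1) * ρ * ∫ y, ‖F y‖ ∂μ := by
  have hk : Measurable fun y : E => ‖x - y‖ ^ (-β) :=
    (continuous_const.sub continuous_id).norm.measurable.pow_const _
  have hkc : ∀ y ∈ s, |‖x - y‖ ^ (-β) - ‖x‖ ^ (-β)| ≤ β * 2 ^ (β + 1) * ‖x‖ ^ (-β - 1) * ρ :=
    fun y hy => (abs_norm_sub_rpow_neg_sub_norm_rpow_neg_le hβ hx
      ((hsρ y hy).trans hρ)).trans (by gcongr; exact hsρ y hy)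
  refine (norm_setIntegral_mul_sub_const_mul_le hs hk.aestronglyMeasurable hF hkc).trans ?_
  exact mul_le_mul_of_nonneg_left
    (setIntegral_le_integral hF.norm (ae_of_all _ fun y => norm_nonneg _)) (by positivity)

theorem memLp_one_add_norm_rpow_neg {E : Type*} [NormedAddCommGroup E] [NormedSpace ℝ E]
    [FiniteDimensional ℝ E] [MeasurableSpace E] [BorelSpace E] (μ : Measure E)
    [μ.IsAddHaarMeasure] {κ p : ℝ} (hp : 0 < p) (hκp : (Module.finrank ℝ E : ℝ) < κ * p) :
    MemLp (fun x : E => (1 + ‖x‖) ^ (-κ)) (ENNReal.ofReal p) μ := by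
  have hmeas : AEStronglyMeasurable (fun x : E => (1 + ‖x‖) ^ (-κ)) μ :=
    ((measurable_const.add measurable_norm).pow_const _).aestronglyMeasurable
  rw [← integrable_norm_rpow_iff hmeas (by simpa using hp) ENNReal.ofReal_ne_top,
    ENNReal.toReal_ofReal hp.le]
  refine (integrable_one_add_norm hκp).congr (ae_of_all _ fun x => ?_)
  have hx : 0 ≤ 1 + ‖x‖ := by positivity
  dsimp only
  rw [Real.norm_of_nonneg (Real.rpow_nonneg hx _), ← Real.rpow_mul hx, neg_mul]

theorem MeasureTheory.AEStronglyMeasurable.setIntegral_prod_section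
    {α β E : Type*} [MeasurableSpace α] [MeasurableSpace β]
    [NormedAddCommGroup E] [NormedSpace ℝ E] {μ : Measure α} {ν : Measure β} [SFinite ν]
    {S : Set (α × β)} (hS : MeasurableSet S) {f : α × β → E}
    (hf : AEStronglyMeasurable f (μ.prod ν)) :
    AEStronglyMeasurable (fun x => ∫ y in {y | (x, y) ∈ S}, f (x, y) ∂ν) μ := by
  refine (hf.indicator hS).integral_prod_right'.congr (ae_of_all _ fun x => ?_)
  exact integral_indicator (f := fun y => f (x, y)) (measurable_prodMk_left (x := x) hS)

section NearRegion

variable {E : Type*} [NormedAddCommGroup E] [MeasurableSpace E]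

/-- The region `Ω₂(x)` of the paper. -/
def nearRegion (η : ℝ) (x : E) : Set E := {y | 1 < ‖x - y‖ ∧ ‖y‖ ≤ ‖x‖ ^ η}

theorem measurableSet_nearRegion [OpensMeasurableSpace E] (η : ℝ) (x : E) :
    MeasurableSet (nearRegion η x) :=
  (measurableSet_lt measurable_const (continuous_const.sub continuous_id).norm.measurable).inter
    (measurableSet_le measurable_norm measurable_const)

theorem MeasureTheory.AEStronglyMeasurable.setIntegral_nearRegion [OpensMeasurableSpace E]
    [SecondCountableTopology E] {μ : Measure E} [SFinite μ] (η : ℝ) {g : E × E → ℝ}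
    (hg : AEStronglyMeasurable g (μ.prod μ)) :
    AEStronglyMeasurable (fun x => ∫ y in nearRegion η x, g (x, y) ∂μ) μ := by
  refine hg.setIntegral_prod_section (S := {q | 1 < ‖q.1 - q.2‖ ∧ ‖q.2‖ ≤ ‖q.1‖ ^ η}) ?_
  exact (measurableSet_lt measurable_const
    (continuous_fst.sub continuous_snd).norm.measurable).inter
    (measurableSet_le continuous_snd.norm.measurable (continuous_fst.norm.measurable.pow_const _))

theorem norm_setIntegral_nearRegion_sub_le [OpensMeasurableSpace E] {μ : Measure E}
    {F : E → ℝ} (hF : Integrable F μ) {β η : ℝ} (hβ : 0 ≤ β) (hη : η < 1) {x : E}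
    (hx : 2 ^ (1 - η)⁻¹ ≤ ‖x‖) :
    ‖(∫ y in nearRegion η x, ‖x - y‖ ^ (-β) * F y ∂μ) -
        ‖x‖ ^ (-β) * ∫ y in nearRegion η x, F y ∂μ‖
      ≤ β * 2 ^ (β + 1) * (∫ y, ‖F y‖ ∂μ) * 2 ^ (β + 1 - η) *
          (1 + ‖x‖) ^ (-(β + 1 - η)) := by
  have hx1 : 1 ≤ ‖x‖ := (Real.one_le_rpow one_le_two (inv_nonneg.2 (by linarith))).trans hx
  have hx0 : 0 < ‖x‖ := zero_lt_one.trans_le hx1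
  calc _ ≤ β * 2 ^ (β + 1) * ‖x‖ ^ (-β - 1) * ‖x‖ ^ η * ∫ y, ‖F y‖ ∂μ :=
        norm_setIntegral_rpow_neg_norm_sub_mul_sub_le hF hβ hx0 (Real.rpow_nonneg hx0.le η)
          (Real.rpow_le_half_self hη hx) (measurableSet_nearRegion η x) fun y hy => hy.2
    _ = β * 2 ^ (β + 1) * (∫ y, ‖F y‖ ∂μ) * ‖x‖ ^ (-(β + 1 - η)) := by
        rw [mul_assoc _ (‖x‖ ^ (-β - 1)), ← Real.rpow_add hx0]
        ring_nf
    _ ≤ _ := by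
        have hF_norm : 0 ≤ ∫ y, ‖F y‖ ∂μ := integral_nonneg fun y => norm_nonneg _
        rw [mul_assoc _ (2 ^ (β + 1 - η))]
        gcongr
        exact Real.rpow_neg_le_two_rpow_mul_one_add_rpow_neg hx1 (by linarith)

end NearRegion

theorem riesz_potential_near_region_replacement_general
    (n : ℕ) (hn : 3 ≤ n) (η : ℝ) (hη1 : η < 1)
    (F : EuclideanSpace ℝ (Fin n) → ℝ) (hF : Integrable F) :
    ∃ R : ℝ, 1 ≤ R ∧
      ∀ p : ℝ, (n : ℝ) / ((n : ℝ) - 1 - η) < p →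
        MemLp
          ({x : EuclideanSpace ℝ (Fin n) | R ≤ ‖x‖}.indicator fun x =>
            (∫ y in {y : EuclideanSpace ℝ (Fin n) | 1 < ‖x - y‖ ∧ ‖y‖ ≤ ‖x‖ ^ η},
                ‖x - y‖ ^ (-((n : ℝ) - 2)) * F y) -
              ‖x‖ ^ (-((n : ℝ) - 2)) *
                ∫ y in {y : EuclideanSpace ℝ (Fin n) | 1 < ‖x - y‖ ∧ ‖y‖ ≤ ‖x‖ ^ η}, F y)
          (ENNReal.ofReal p) := by
  have hn3 : (3 : ℝ) ≤ n := by exact_mod_cast hn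
  set β : ℝ := (n : ℝ) - 2 with hβ_def
  have hβ : 0 ≤ β := by linarith
  refine ⟨2 ^ (1 - η)⁻¹, Real.one_le_rpow one_le_two (inv_nonneg.2 (by linarith)),
    fun p hp => ?_⟩
  have hκ : 0 < β + 1 - η := by linarith
  have hp0 : 0 < p := (div_pos (by linarith) (by linarith)).trans hp
  have hκp : (Module.finrank ℝ (EuclideanSpace ℝ (Fin n)) : ℝ) < (β + 1 - η) * p := by
    rwa [finrank_euclideanSpace_fin, mul_comm, ← div_lt_iff₀ hκ,
      show β + 1 - η = n - 1 - η by rw [hβ_def]; ring]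
  have hkernel : AEStronglyMeasurable
      (fun q : EuclideanSpace ℝ (Fin n) × EuclideanSpace ℝ (Fin n) =>
        ‖q.1 - q.2‖ ^ (-β) * F q.2) (volume.prod volume) :=
    ((continuous_fst.sub continuous_snd).norm.measurable.pow_const _).aestronglyMeasurable.mul
      hF.1.comp_snd
  refine ((memLp_one_add_norm_rpow_neg volume hp0 hκp).const_mul
    (β * 2 ^ (β + 1) * (∫ y, ‖F y‖) * 2 ^ (β + 1 - η))).of_le ?_
    (ae_of_all _ fun x => ?_)
  · exact ((hkernel.setIntegral_nearRegion η).sub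
      ((continuous_norm.measurable.pow_const _).aestronglyMeasurable.mul
        (hF.1.comp_snd.setIntegral_nearRegion η))).indicator
      (measurableSet_le measurable_const measurable_norm)
  · rw [norm_indicator_eq_indicator_norm]
    refine indicator_apply_le' (fun hx => ?_) (fun _ => norm_nonneg _)
    exact (norm_setIntegral_nearRegion_sub_le hF hβ hη1 hx).trans (Real.le_norm_self _)

/-- Proposition 4 of the paper: let `n ≥ 3`, `β = n - 2`, `0 < η < 1`
and `F ∈ L¹(ℝⁿ)`.  With `Ω₂(x) = {y : |x-y| > 1, |y| ≤ |x|^η}`, there is an `R ≥ 1`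
such that `h(x) = (∫_{Ω₂(x)} |x-y|^{-β} F(y) dy - |x|^{-β} ∫_{Ω₂(x)} F(y) dy) · 𝟙_{|x| ≥ R}`
belongs to `L^p(ℝⁿ)` for every `p > n/(n - 1 - η)`. -/
theorem riesz_potential_near_region_replacement
    (n : ℕ) (hn : 3 ≤ n) (η : ℝ) (hη0 : 0 < η) (hη1 : η < 1)
    (F : EuclideanSpace ℝ (Fin n) → ℝ) (hF : Integrable F) :
    ∃ R : ℝ, 1 ≤ R ∧
      ∀ p : ℝ, (n : ℝ) / ((n : ℝ) - 1 - η) < p →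
        MemLp
          ({x : EuclideanSpace ℝ (Fin n) | R ≤ ‖x‖}.indicator fun x =>
            (∫ y in {y : EuclideanSpace ℝ (Fin n) | 1 < ‖x - y‖ ∧ ‖y‖ ≤ ‖x‖ ^ η},
                ‖x - y‖ ^ (-((n : ℝ) - 2)) * F y) -
              ‖x‖ ^ (-((n : ℝ) - 2)) *
                ∫ y in {y : EuclideanSpace ℝ (Fin n) | 1 < ‖x - y‖ ∧ ‖y‖ ≤ ‖x‖ ^ η}, F y)
          (ENNReal.ofReal p) :=
  riesz_potential_near_region_replacement_general n hn η hη1 F hF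
end
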